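/- Let A1 and A2 be TABG over the same signature Σ with the same flat theory E. Then one can construct a TABG A with theory E such that L(A) = L(A1) ∩ L(A2); i.e. the class of TABG languages modulo the same equational theory is closed under intersection. -/

import Mathlib

set_option maxHeartbeats 1000000

namespace TreeAut

/-! ### Ranked terms -/

/-- Ranked terms over a symbol type `F` (arities are imposed by well-formedness). -/
inductive RTerm (F : Type) : Type
  | node : F → List (RTerm F) → RTerm F

namespace RTerm

def rootLabel {F : Type} : RTerm F → F
  | .node f _ => f

/-- `SubAt t p s` : the subterm of `t` at position `p` is `s`. -/
inductive SubAt {F : Type} : RTerm F → List ℕ → RTerm F → Prop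
  | refl (t : RTerm F) : SubAt t [] t
  | step {f : F} {ts : List (RTerm F)} {i : ℕ} {u s : RTerm F} {p : List ℕ} :
      ts[i]? = some u → SubAt u p s → SubAt (RTerm.node f ts) (i :: p) s

/-- `p` is a position of `t`. -/
def IsPos {F : Type} (t : RTerm F) (p : List ℕ) : Prop := ∃ s, SubAt t p s

/-- `ReplAt t p s t'` : `t'` is the result of replacing in `t` the subterm at `p` by `s`. -/
inductive ReplAt {F : Type} : RTerm F → List ℕ → RTerm F → RTerm F → Prop
  | here (t s : RTerm F) : ReplAt t [] s s
  | step {f : F} {ts : List (RTerm F)} {i : ℕ} {u u' s : RTerm F} {p : List ℕ} :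
      ts[i]? = some u → ReplAt u p s u' →
      ReplAt (RTerm.node f ts) (i :: p) s (RTerm.node f (ts.set i u'))

/-- Height of a term: the maximal length of a position. -/
def height {F : Type} : RTerm F → ℕ
  | .node _ [] => 0
  | .node f (t :: ts) => max (height t + 1) (height (RTerm.node f ts))

/-- Well-formedness of a term with respect to an arity function. -/
inductive WF {F : Type} (ar : F → ℕ) : RTerm F → Prop
  | node {f : F} {ts : List (RTerm F)} :
      ts.length = ar f → (∀ u ∈ ts, WF ar u) → WF ar (RTerm.node f ts)

/-- A constant, i.e. a term reduced to a symbol (of arity 0). -/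
def IsConst {F : Type} (t : RTerm F) : Prop := ∃ c : F, t = RTerm.node c []

/-- Relabeling of a term. -/
def map {F G : Type} (g : F → G) : RTerm F → RTerm G
  | .node f ts => RTerm.node (g f) (ts.attach.map (fun u => map g u.1))
decreasing_by
  simp only [RTerm.node.sizeOf_spec]
  have := List.sizeOf_lt_of_mem u.2
  omega

end RTerm

/-! ### Patterns (terms with variables) and flat equational theories -/

/-- Terms with variables (variables are natural numbers). -/
inductive Pat (F : Type) : Type
  | var : ℕ → Pat F
  | node : F → List (Pat F) → Pat F

namespace Pat

def subst {F : Type} (σ : ℕ → RTerm F) : Pat F → RTerm F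
  | .var v => σ v
  | .node f ps => RTerm.node f (ps.attach.map (fun p => subst σ p.1))
decreasing_by
  simp only [Pat.node.sizeOf_spec]
  have := List.sizeOf_lt_of_mem p.2
  omega

def height {F : Type} : Pat F → ℕ
  | .var _ => 0
  | .node _ [] => 0
  | .node f (p :: ps) => max (height p + 1) (height (Pat.node f ps))

inductive HasVar {F : Type} (v : ℕ) : Pat F → Prop
  | var : HasVar v (Pat.var v)
  | node {f : F} {ps : List (Pat F)} {p : Pat F} :
      p ∈ ps → HasVar v p → HasVar v (Pat.node f ps)

inductive WF {F : Type} (ar : F → ℕ) : Pat F → Prop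
  | var (v : ℕ) : WF ar (Pat.var v)
  | node {f : F} {ps : List (Pat F)} :
      ps.length = ar f → (∀ p ∈ ps, WF ar p) → WF ar (Pat.node f ps)

end Pat

/-- A flat equation: both sides well-formed, of the same height which is at most 1,
and with the same variables. -/
def IsFlatEq {F : Type} (ar : F → ℕ) (e : Pat F × Pat F) : Prop :=
  e.1.WF ar ∧ e.2.WF ar ∧ e.1.height = e.2.height ∧ e.1.height ≤ 1 ∧
  (∀ v : ℕ, Pat.HasVar v e.1 ↔ Pat.HasVar v e.2)

/-- One rewrite step using an equation of `E` (in either direction) at some position. -/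
def Rew {F : Type} (E : List (Pat F × Pat F)) (s t : RTerm F) : Prop :=
  ∃ l r : Pat F, ((l, r) ∈ E ∨ (r, l) ∈ E) ∧
    ∃ (σ : ℕ → RTerm F) (p : List ℕ),
      RTerm.SubAt s p (l.subst σ) ∧ RTerm.ReplAt s p (r.subst σ) t

/-- Equivalence modulo the set of equations `E`. -/
def EqE {F : Type} (E : List (Pat F × Pat F)) : RTerm F → RTerm F → Prop :=
  Relation.ReflTransGen (Rew E)

/-! ### Global constraints -/

/-- Transition rule of a tree automaton with constraints between brothers:
`sym(args) → res` with brother equalities `bcEq` and disequalities `bcNeq`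
(1-based indices of children). -/
structure Rule (F Q : Type) where
  sym : F
  args : List Q
  bcEq : List (ℕ × ℕ)
  bcNeq : List (ℕ × ℕ)
  res : Q

/-- Atomic global constraints: `q ≈ q'`, `q ≉ q'`, and linear inequalities
`Σ c·|q| ≥ a` (type `|.|`) and `Σ c·‖q‖ ≥ a` (type `‖.‖`). -/
inductive GAtom (Q : Type) : Type
  | eq : Q → Q → GAtom Q
  | neq : Q → Q → GAtom Q
  | cnt : List (ℤ × Q) → ℤ → GAtom Q
  | cls : List (ℤ × Q) → ℤ → GAtom Q

/-- Boolean combinations of atomic global constraints. -/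
inductive GC (Q : Type) : Type
  | tt : GC Q
  | ff : GC Q
  | atom : GAtom Q → GC Q
  | and : GC Q → GC Q → GC Q
  | or : GC Q → GC Q → GC Q
  | not : GC Q → GC Q

/-- The set of `=E`-equivalence classes of members of a set of terms. -/
def classesOf {F : Type} (E : List (Pat F × Pat F)) (S : Set (RTerm F)) :
    Set (Set (RTerm F)) :=
  {C | ∃ t ∈ S, C = {u | EqE E t u}}

section Sat

variable {β F Q : Type}

/-- Positions of a (run) tree where the node has state `q`
(`st` extracts the state of a node label). -/
def stPos (st : β → Q) (r : RTerm β) (q : Q) : Set (List ℕ) :=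
  {p | ∃ s, RTerm.SubAt r p s ∧ st s.rootLabel = q}

/-- `⟦|q|⟧` : the number of positions with state `q`. -/
noncomputable def stCount (st : β → Q) (r : RTerm β) (q : Q) : ℕ :=
  (stPos st r q).ncard

/-- Terms occurring below positions with state `q`. -/
def stTerms (st : β → Q) (sy : β → F) (r : RTerm β) (q : Q) : Set (RTerm F) :=
  {t | ∃ p s, RTerm.SubAt r p s ∧ st s.rootLabel = q ∧ s.map sy = t}

/-- `⟦‖q‖⟧` : the number of `=E`-classes of terms at positions with state `q`. -/
noncomputable def clsCount (E : List (Pat F × Pat F)) (st : β → Q) (sy : β → F)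
    (r : RTerm β) (q : Q) : ℕ :=
  (classesOf E (stTerms st sy r q)).ncard

/-- Satisfaction of a global atomic constraint by a run tree. -/
def satAtom (E : List (Pat F × Pat F)) (st : β → Q) (sy : β → F) (r : RTerm β) :
    GAtom Q → Prop
  | .eq q q' => ∀ p p' s s', p ≠ p' → RTerm.SubAt r p s → RTerm.SubAt r p' s' →
      st s.rootLabel = q → st s'.rootLabel = q' → EqE E (s.map sy) (s'.map sy)
  | .neq q q' => ∀ p p' s s', p ≠ p' → RTerm.SubAt r p s → RTerm.SubAt r p' s' →
      st s.rootLabel = q → st s'.rootLabel = q' → ¬ EqE E (s.map sy) (s'.map sy)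
  | .cnt l a => a ≤ (l.map (fun cq => cq.1 * (stCount st r cq.2 : ℤ))).sum
  | .cls l a => a ≤ (l.map (fun cq => cq.1 * (clsCount E st sy r cq.2 : ℤ))).sum

/-- Satisfaction of a global constraint by a run tree. -/
def satGC (E : List (Pat F × Pat F)) (st : β → Q) (sy : β → F) (r : RTerm β) :
    GC Q → Prop
  | .tt => True
  | .ff => False
  | .atom a => satAtom E st sy r a
  | .and c d => satGC E st sy r c ∧ satGC E st sy r d
  | .or c d => satGC E st sy r c ∨ satGC E st sy r d
  | .not c => ¬ satGC E st sy r c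

end Sat

/-! ### Tree automata with global and brother constraints modulo a flat theory -/

/-- A run is represented as a tree labeled by the rules applied at each position. -/
abbrev Run (F Q : Type) := RTerm (Rule F Q)

def Run.state {F Q : Type} (r : Run F Q) : Q := (RTerm.rootLabel r).res
def Run.term {F Q : Type} (r : Run F Q) : RTerm F := r.map Rule.sym

/-- `r` is a structurally correct run using rules of `Δ`, whose local brother
constraints are satisfied modulo `E`. -/
inductive IsRun {F Q : Type} (Δ : List (Rule F Q)) (E : List (Pat F × Pat F)) :
    Run F Q → Prop
  | node {ρ : Rule F Q} {rs : List (Run F Q)} :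
      ρ ∈ Δ →
      ρ.args = rs.map Run.state →
      (∀ r ∈ rs, IsRun Δ E r) →
      (∀ i j ri rj, (i, j) ∈ ρ.bcEq → rs[i - 1]? = some ri →
        rs[j - 1]? = some rj → EqE E ri.term rj.term) →
      (∀ i j ri rj, (i, j) ∈ ρ.bcNeq → rs[i - 1]? = some ri →
        rs[j - 1]? = some rj → ¬ EqE E ri.term rj.term) →
      IsRun Δ E (RTerm.node ρ rs)

/-- Tree automaton with brother constraints and global constraints modulo a flat theory. -/
structure TABG (F Q : Type) where
  arity : F → ℕ
  stQ : Finset Q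
  rules : List (Rule F Q)
  final : List Q
  eqs : List (Pat F × Pat F)
  gc : GC Q

def TABG.IsAccRun {F Q : Type} (A : TABG F Q) (r : Run F Q) : Prop :=
  IsRun A.rules A.eqs r ∧ satGC A.eqs Rule.res Rule.sym r A.gc ∧ r.state ∈ A.final

def TABG.Lang {F Q : Type} (A : TABG F Q) : Set (RTerm F) :=
  {t | ∃ r : Run F Q, A.IsAccRun r ∧ r.term = t}

def Rule.WFr {F Q : Type} (ar : F → ℕ) (S : Finset Q) (ρ : Rule F Q) : Prop :=
  ρ.args.length = ar ρ.sym ∧ ρ.res ∈ S ∧ (∀ q ∈ ρ.args, q ∈ S) ∧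
  (∀ ij ∈ ρ.bcEq, 1 ≤ ij.1 ∧ ij.1 ≤ ρ.args.length ∧ 1 ≤ ij.2 ∧ ij.2 ≤ ρ.args.length) ∧
  (∀ ij ∈ ρ.bcNeq, 1 ≤ ij.1 ∧ ij.1 ≤ ρ.args.length ∧ 1 ≤ ij.2 ∧ ij.2 ≤ ρ.args.length)

/-- Well-formedness of a TABG: the equational theory is flat, the rules respect
the arities and the state set, and final states belong to the state set. -/
def TABG.WF {F Q : Type} (A : TABG F Q) : Prop :=
  (∀ e ∈ A.eqs, IsFlatEq A.arity e) ∧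
  (∀ ρ ∈ A.rules, ρ.WFr A.arity A.stQ) ∧
  (∀ q ∈ A.final, q ∈ A.stQ)

/-! ### Classes of constraints -/

def GAtom.IsEqNeq {Q : Type} : GAtom Q → Prop
  | .eq _ _ => True
  | .neq _ _ => True
  | .cnt _ _ => False
  | .cls _ _ => False

/-- All coefficients and the constant have the same sign. -/
def sameSign (l : List ℤ) (a : ℤ) : Prop :=
  ((∀ c ∈ l, 0 ≤ c) ∧ 0 ≤ a) ∨ ((∀ c ∈ l, c ≤ 0) ∧ a ≤ 0)

/-- eq/neq atoms and *natural* linear inequalities. -/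
def GAtom.IsNat {Q : Type} : GAtom Q → Prop
  | .eq _ _ => True
  | .neq _ _ => True
  | .cnt l a => sameSign (l.map Prod.fst) a
  | .cls l a => sameSign (l.map Prod.fst) a

/-- eq/neq atoms and natural linear inequalities over the `|q|` only. -/
def GAtom.IsNatCnt {Q : Type} : GAtom Q → Prop
  | .eq _ _ => True
  | .neq _ _ => True
  | .cnt l a => sameSign (l.map Prod.fst) a
  | .cls _ _ => False

def GC.AtomsAre {Q : Type} (P : GAtom Q → Prop) : GC Q → Prop
  | .tt => True
  | .ff => True
  | .atom a => P a
  | .and c d => GC.AtomsAre P c ∧ GC.AtomsAre P d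
  | .or c d => GC.AtomsAre P c ∧ GC.AtomsAre P d
  | .not c => GC.AtomsAre P c

/-- Positive conjunctive constraint: a conjunction of atoms. -/
def GC.IsConjAtoms {Q : Type} : GC Q → Prop
  | .tt => True
  | .ff => False
  | .atom _ => True
  | .and c d => GC.IsConjAtoms c ∧ GC.IsConjAtoms d
  | .or _ _ => False
  | .not _ => False

/-- A literal: an atom (with natural arithmetic atoms) or the negation of an
eq/neq atom. -/
def GC.IsLit {Q : Type} : GC Q → Prop
  | .atom a => GAtom.IsNat a
  | .not (.atom (.eq _ _)) => True
  | .not (.atom (.neq _ _)) => True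
  | _ => False

def GC.IsConjLit {Q : Type} : GC Q → Prop
  | .and c d => GC.IsConjLit c ∧ GC.IsConjLit d
  | c => GC.IsLit c

def GC.IsDNF {Q : Type} : GC Q → Prop
  | .or c d => GC.IsDNF c ∧ GC.IsDNF d
  | c => GC.IsConjLit c

/-- Normalized constraint: `true`, `false`, or a disjunction of conjunctions of
literals in which all arithmetic literals are positive. -/
def GC.Normalized {Q : Type} (c : GC Q) : Prop :=
  c = GC.tt ∨ c = GC.ff ∨ GC.IsDNF c

/-- No reflexive disequality constraints (the TAGED restriction). -/
def GC.NoReflNeq {Q : Type} : GC Q → Prop :=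
  GC.AtomsAre (fun a => match a with
    | .neq q q' => q ≠ q'
    | _ => True)

def conjList {Q : Type} : List (GC Q) → GC Q
  | [] => GC.tt
  | [c] => c
  | c :: cs => GC.and c (conjList cs)

def disjList {Q : Type} : List (GC Q) → GC Q
  | [] => GC.ff
  | [c] => c
  | c :: cs => GC.or c (disjList cs)

/-- No local constraints between brothers. -/
def TABG.NoBrother {F Q : Type} (A : TABG F Q) : Prop :=
  ∀ ρ ∈ A.rules, ρ.bcEq = [] ∧ ρ.bcNeq = []

/-- A TAG: empty equational theory and no brother constraints. -/
def TABG.IsTAG {F Q : Type} (A : TABG F Q) : Prop := A.eqs = [] ∧ A.NoBrother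

/-- A plain tree automaton: a TAG with trivial global constraint. -/
def TABG.IsTA {F Q : Type} (A : TABG F Q) : Prop := A.IsTAG ∧ A.gc = GC.tt

/-! ### Synonym states -/

section Syn

variable {F Q : Type} [DecidableEq Q]

/-- Possible replacements of a state occurrence: `q̄` may stay or become `q̂`. -/
def replS (qb qh q : Q) : List Q := if q = qb then [qb, qh] else [q]

/-- Replacement of every occurrence of `|q̄|` (resp. `‖q̄‖`) by `|q̄| + |q̂|`
(resp. `‖q̄‖ + ‖q̂‖`) in a linear expression. -/
def linRepl (qb qh : Q) (l : List (ℤ × Q)) : List (ℤ × Q) :=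
  l.flatMap (fun cq => (replS qb qh cq.2).map (fun q' => (cq.1, q')))

/-- Literal transformation on positive atoms. -/
def synAtom (qb qh : Q) : GAtom Q → GC Q
  | .eq q1 q2 => conjList ((replS qb qh q1).flatMap (fun a =>
      (replS qb qh q2).map (fun b => GC.atom (GAtom.eq a b))))
  | .neq q1 q2 => conjList ((replS qb qh q1).flatMap (fun a =>
      (replS qb qh q2).map (fun b => GC.atom (GAtom.neq a b))))
  | .cnt l a => GC.atom (GAtom.cnt (linRepl qb qh l) a)
  | .cls l a => GC.atom (GAtom.cls (linRepl qb qh l) a)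

/-- The literal transformation `Ĉ` of (a normalized) constraint, for `q̄ ↝ q̂`. -/
def GC.synTrans (qb qh : Q) : GC Q → GC Q
  | .tt => .tt
  | .ff => .ff
  | .atom a => synAtom qb qh a
  | .not (.atom (.eq q1 q2)) => disjList ((replS qb qh q1).flatMap (fun a =>
      (replS qb qh q2).map (fun b => GC.not (GC.atom (GAtom.eq a b)))))
  | .not (.atom (.neq q1 q2)) => disjList ((replS qb qh q1).flatMap (fun a =>
      (replS qb qh q2).map (fun b => GC.not (GC.atom (GAtom.neq a b)))))
  | .not c => GC.not (GC.synTrans qb qh c)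
  | .and c d => GC.and (GC.synTrans qb qh c) (GC.synTrans qb qh d)
  | .or c d => GC.or (GC.synTrans qb qh c) (GC.synTrans qb qh d)

/-- All rules obtained from `ρ` by all possible replacements of occurrences of
`q̄` by `q̂`. -/
def Rule.synVars (qb qh : Q) (ρ : Rule F Q) : List (Rule F Q) :=
  (ρ.args.mapM (replS qb qh)).flatMap (fun args' =>
    (replS qb qh ρ.res).map (fun res' =>
      { sym := ρ.sym, args := args', bcEq := ρ.bcEq, bcNeq := ρ.bcNeq, res := res' }))

/-- `F_{q̄↝q̂}` on the list of final states. -/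
def finSyn (qb qh : Q) (l : List Q) : List Q := if qb ∈ l then qh :: l else l

/-- The constraint `‖q‖ = k`. -/
def clsEqC (q : Q) (k : ℤ) : GC Q :=
  GC.and (GC.atom (GAtom.cls [(1, q)] k)) (GC.atom (GAtom.cls [(-1, q)] (-k)))

/-- The automaton `A_{q̄↝q̂}`. -/
def TABG.synonym (A : TABG F Q) (qb qh : Q) : TABG F Q :=
  { arity := A.arity
    stQ := insert qh A.stQ
    rules := A.rules.flatMap (Rule.synVars qb qh)
    final := finSyn qb qh A.final
    eqs := A.eqs
    gc := GC.and
      (GC.or (GC.and (clsEqC qb 0) (clsEqC qh 0))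
             (GC.and (clsEqC qh 1) (GC.atom (GAtom.neq qb qh))))
      (GC.synTrans qb qh A.gc) }

end Syn

/-! ### Removal of the counting constraints `|q|` : the automaton `A_¬ℕ` -/

def GC.cntAtoms {Q : Type} : GC Q → List (List (ℤ × Q) × ℤ)
  | .atom (.cnt l a) => [(l, a)]
  | .and c d => GC.cntAtoms c ++ GC.cntAtoms d
  | .or c d => GC.cntAtoms c ++ GC.cntAtoms d
  | .not c => GC.cntAtoms c
  | _ => []

def GC.eqAtoms {Q : Type} : GC Q → List (Q × Q)
  | .atom (.eq q q') => [(q, q')]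
  | .and c d => GC.eqAtoms c ++ GC.eqAtoms d
  | .or c d => GC.eqAtoms c ++ GC.eqAtoms d
  | .not c => GC.eqAtoms c
  | _ => []

def GC.neqAtoms {Q : Type} : GC Q → List (Q × Q)
  | .atom (.neq q q') => [(q, q')]
  | .and c d => GC.neqAtoms c ++ GC.neqAtoms d
  | .or c d => GC.neqAtoms c ++ GC.neqAtoms d
  | .not c => GC.neqAtoms c
  | _ => []

/-- `max_A` : one plus the maximal constant occurring in the counting literals. -/
def GC.maxConst {Q : Type} (c : GC Q) : ℕ :=
  1 + ((c.cntAtoms.map (fun la => la.2.natAbs)).foldr max 0)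

/-- Truncated sum of two mappings `Q → {0,…,m}`. -/
def msumF {Q : Type} {m : ℕ} (M1 M2 : Q → Fin (m + 1)) : Q → Fin (m + 1) :=
  fun q => ⟨min ((M1 q : ℕ) + (M2 q : ℕ)) m, Nat.lt_succ_of_le (Nat.min_le_right _ _)⟩

/-- The mapping `M_q`. -/
def unitMap {Q : Type} [DecidableEq Q] (m : ℕ) (q : Q) : Q → Fin (m + 1) :=
  fun q' => if q' = q then ⟨min 1 m, Nat.lt_succ_of_le (Nat.min_le_right _ _)⟩
            else ⟨0, Nat.succ_pos m⟩

/-- Value of a linear expression under a mapping. -/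
def lvalF {Q : Type} {m : ℕ} (M : Q → Fin (m + 1)) (l : List (ℤ × Q)) : ℤ :=
  (l.map (fun cq => cq.1 * ((M cq.2 : ℕ) : ℤ))).sum

/-- All variants of a rule, decorated with occurrence-counting mappings. -/
noncomputable def Rule.notNVars {F Q : Type} [Fintype Q] [DecidableEq Q] (m : ℕ) (ρ : Rule F Q) :
    List (Rule F (Q × (Q → Fin (m + 1)))) :=
  ((ρ.args.mapM (fun q =>
      ((Finset.univ : Finset (Q → Fin (m + 1))).toList).map (fun M => (q, M))))).map
    (fun args' =>
      { sym := ρ.sym, args := args', bcEq := ρ.bcEq, bcNeq := ρ.bcNeq,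
        res := (ρ.res, (args'.map Prod.snd).foldr msumF (unitMap m ρ.res)) })

/-- The automaton `A_¬ℕ`. -/
noncomputable def TABG.notN {F Q : Type} [Fintype Q] [DecidableEq Q] (A : TABG F Q) :
    TABG F (Q × (Q → Fin (A.gc.maxConst + 1))) :=
  { arity := A.arity
    stQ := A.stQ ×ˢ (Finset.univ : Finset (Q → Fin (A.gc.maxConst + 1)))
    rules := A.rules.flatMap (Rule.notNVars A.gc.maxConst)
    final := (A.final.flatMap (fun q =>
        ((Finset.univ : Finset (Q → Fin (A.gc.maxConst + 1))).toList).map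
          (fun M => (q, M)))).filter
        (fun qM => decide (∀ la ∈ A.gc.cntAtoms, la.2 ≤ lvalF qM.2 la.1))
    eqs := A.eqs
    gc := GC.and
      (conjList ((A.gc.eqAtoms).flatMap (fun qq =>
        ((Finset.univ : Finset (Q → Fin (A.gc.maxConst + 1))).toList).flatMap (fun M1 =>
          ((Finset.univ : Finset (Q → Fin (A.gc.maxConst + 1))).toList).map (fun M2 =>
            GC.atom (GAtom.eq (qq.1, M1) (qq.2, M2)))))))
      (conjList ((A.gc.neqAtoms).flatMap (fun qq =>
        ((Finset.univ : Finset (Q → Fin (A.gc.maxConst + 1))).toList).flatMap (fun M1 =>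
          ((Finset.univ : Finset (Q → Fin (A.gc.maxConst + 1))).toList).map (fun M2 =>
            GC.atom (GAtom.neq (qq.1, M1) (qq.2, M2))))))) }

/-! ### Global pumpings -/

section Pump

variable {F Q : Type}

/-- `H_i` : positions of subruns of positive height equal to `i`. -/
def Hset (r : Run F Q) (i : ℕ) : Set (List ℕ) :=
  {p | ∃ s, RTerm.SubAt r p s ∧ 0 < RTerm.height s ∧ RTerm.height s = i}

/-- `Ȟ_i` : positions `p.j` of subruns of positive height `< i` whose parent has
height `> i`. -/
def Hcheck (r : Run F Q) (i : ℕ) : Set (List ℕ) :=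
  {p' | ∃ (p : List ℕ) (j : ℕ) (s s' : Run F Q), p' = p ++ [j] ∧
    RTerm.SubAt r p s ∧ RTerm.SubAt r p' s' ∧
    0 < RTerm.height s' ∧ RTerm.height s' < i ∧ i < RTerm.height s}

/-- `H̊_i` : positions `p.j` of subruns of height `0` (with `0 < i`) whose parent
has height `> i`. -/
def Hring (r : Run F Q) (i : ℕ) : Set (List ℕ) :=
  {p' | ∃ (p : List ℕ) (j : ℕ) (s s' : Run F Q), p' = p ++ [j] ∧
    RTerm.SubAt r p s ∧ RTerm.SubAt r p' s' ∧
    RTerm.height s' = 0 ∧ 0 < i ∧ i < RTerm.height s}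

def Dom (r : Run F Q) (i : ℕ) : Set (List ℕ) := Hset r i ∪ Hcheck r i ∪ Hring r i

/-- A pump-injection `I : (H_i ∪ Ȟ_i ∪ H̊_i) → (H_j ∪ Ȟ_j ∪ H̊_j)`. -/
structure PumpInj (E : List (Pat F × Pat F)) (r : Run F Q) (i j : ℕ)
    (I : List ℕ → List ℕ) : Prop where
  inj : Set.InjOn I (Dom r i)
  mapsH : Set.MapsTo I (Hset r i) (Hset r j)
  mapsHc : Set.MapsTo I (Hcheck r i) (Hcheck r j)
  mapsHr : Set.MapsTo I (Hring r i) (Hring r j)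
  idRing : ∀ p ∈ Hring r i, I p = p
  stPres : ∀ p ∈ Dom r i, ∀ s s', RTerm.SubAt r p s → RTerm.SubAt r (I p) s' →
    Run.state s = Run.state s'
  eqPres : ∀ p1 p2, p1 ∈ Dom r i → p2 ∈ Dom r i →
    ∀ s1 s2 s1' s2', RTerm.SubAt r p1 s1 → RTerm.SubAt r p2 s2 →
      RTerm.SubAt r (I p1) s1' → RTerm.SubAt r (I p2) s2' →
      (EqE E (Run.term s1) (Run.term s2) ↔ EqE E (Run.term s1') (Run.term s2'))

/-- Simultaneous replacement at all positions of `D` (which are assumed to be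
pairwise parallel): at a position of `D` the subtree is replaced by a tree
allowed by `ρ`, elsewhere the tree is kept. -/
inductive MultiRepl {β : Type} (D : Set (List ℕ)) (ρ : List ℕ → RTerm β → Prop) :
    List ℕ → RTerm β → RTerm β → Prop
  | here {p : List ℕ} {t t' : RTerm β} : p ∈ D → ρ p t' → MultiRepl D ρ p t t'
  | node {p : List ℕ} {f : β} {ts ts' : List (RTerm β)} :
      p ∉ D → ts.length = ts'.length →
      (∀ (k : ℕ) u u', ts[k]? = some u → ts'[k]? = some u' →
        MultiRepl D ρ (p ++ [k]) u u') →
      MultiRepl D ρ p (RTerm.node f ts) (RTerm.node f ts')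

/-- `r'` is the global pumping on `r` with indexes `i,j` and injection `I`. -/
def IsGlobalPumpingWith (E : List (Pat F × Pat F)) (r : Run F Q) (i j : ℕ)
    (I : List ℕ → List ℕ) (r' : Run F Q) : Prop :=
  PumpInj E r i j I ∧
  MultiRepl (Dom r i) (fun p s => RTerm.SubAt r (I p) s) [] r r'

/-- The `=E`-classes of the subterms at positions of `P`. -/
def classesAt (E : List (Pat F × Pat F)) (r : Run F Q) (P : Set (List ℕ)) :
    Set (Set (RTerm F)) :=
  classesOf E {t | ∃ p ∈ P, ∃ s, RTerm.SubAt r p s ∧ Run.term s = t}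

/-- The tuple `r_{t,P}` of a class `C`, as a function on states. -/
noncomputable def tupleAt (r : Run F Q) (P : Set (List ℕ)) (C : Set (RTerm F))
    (q : Q) : ℕ :=
  {p | p ∈ P ∧ ∃ s, RTerm.SubAt r p s ∧ Run.state s = q ∧ Run.term s ∈ C}.ncard

/-- The multiset ordering `r_P ≤ r_{P'}` : an injection on classes which is
dominating on the associated tuples. -/
def MsetLE (E : List (Pat F × Pat F)) (r : Run F Q) (P P' : Set (List ℕ)) : Prop :=
  ∃ φ : Set (RTerm F) → Set (RTerm F),
    Set.InjOn φ (classesAt E r P) ∧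
    Set.MapsTo φ (classesAt E r P) (classesAt E r P') ∧
    ∀ C ∈ classesAt E r P, ∀ q, tupleAt r P C q ≤ tupleAt r P' (φ C) q

end Pump

/-! ### Multisets of tuples of naturals (for the well quasi-ordering) -/

def TupLE {n : ℕ} (x y : Fin n → ℕ) : Prop := ∀ k, x k ≤ y k

/-- Multiset ordering: an injection mapping each element to a dominating one. -/
def MLE {n : ℕ} (S T : Multiset (Fin n → ℕ)) : Prop :=
  ∃ T' : Multiset (Fin n → ℕ), T' ≤ T ∧ Multiset.Rel TupLE S T'

def msumT {n : ℕ} (S : Multiset (Fin n → ℕ)) : ℕ :=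
  (S.map (fun x => ∑ k, x k)).sum

/-! ### Hedge automata with global constraints, and currying -/

/-- A finite word automaton over the alphabet `Q` (auxiliary states are naturals). -/
structure WordAut (Q : Type) where
  stS : Finset ℕ
  init : ℕ
  final : List ℕ
  trans : List (ℕ × Q × ℕ)

inductive WAccepts {Q : Type} (W : WordAut Q) : ℕ → List Q → Prop
  | nil {s : ℕ} : s ∈ W.final → WAccepts W s []
  | cons {s : ℕ} {q : Q} {s' : ℕ} {w : List Q} :
      (s, q, s') ∈ W.trans → WAccepts W s' w → WAccepts W s (q :: w)

def WordAut.Lang {Q : Type} (W : WordAut Q) (w : List Q) : Prop := WAccepts W W.init w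

/-- Transition rule `a(L) → q` of a hedge automaton. -/
structure HRule (F Q : Type) where
  sym : F
  wa : WordAut Q
  res : Q

/-- Hedge automaton with global constraints, over unranked ordered terms. -/
structure HAG (F Q : Type) where
  stQ : Finset Q
  rules : List (HRule F Q)
  final : List Q
  gc : GC Q

abbrev HRun (F Q : Type) := RTerm (HRule F Q)

def HRun.state {F Q : Type} (r : HRun F Q) : Q := (RTerm.rootLabel r).res
def HRun.term {F Q : Type} (r : HRun F Q) : RTerm F := r.map HRule.sym

inductive IsHRun {F Q : Type} (Δ : List (HRule F Q)) : HRun F Q → Prop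
  | node {ρ : HRule F Q} {rs : List (HRun F Q)} :
      ρ ∈ Δ → ρ.wa.Lang (rs.map HRun.state) →
      (∀ r ∈ rs, IsHRun Δ r) → IsHRun Δ (RTerm.node ρ rs)

def HAG.Lang {F Q : Type} (A : HAG F Q) : Set (RTerm F) :=
  {t | ∃ r : HRun F Q, IsHRun A.rules r ∧
        satGC ([] : List (Pat F × Pat F)) HRule.res HRule.sym r A.gc ∧
        HRun.state r ∈ A.final ∧ HRun.term r = t}

/-- The ranked signature `Σ_@` : symbols of `Σ` become constants, `none` is the
binary symbol `@`. -/
def arAt {F : Type} : Option F → ℕ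
  | none => 2
  | some _ => 0

/-- The `curry` encoding of unranked terms into ranked terms over `Σ_@`. -/
inductive Curried {F : Type} : RTerm F → RTerm (Option F) → Prop
  | base {a : F} : Curried (RTerm.node a []) (RTerm.node (some a) [])
  | step {a : F} {ts : List (RTerm F)} {t : RTerm F} {u v : RTerm (Option F)} :
      Curried (RTerm.node a ts) u → Curried t v →
      Curried (RTerm.node a (ts ++ [t])) (RTerm.node none [u, v])

/-! ### Concrete signatures and languages -/

/-- The signature `{a:0, s:1, f:2}` (resp. `{a:0, g:1, f:2}`): symbol `0` has
arity 0, symbol `1` arity 1, symbol `2` arity 2. -/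
def ar3 : Fin 3 → ℕ := ![0, 1, 2]

/-- `iter1 n` is `s^n(a)` (resp. `g^n(a)`). -/
def iter1 : ℕ → RTerm (Fin 3)
  | 0 => RTerm.node 0 []
  | n + 1 => RTerm.node 1 [iter1 n]

/-- `chain [n1,…,nk] = f(s^{n1}(a), f(s^{n2}(a), …, f(s^{nk}(a), a)…))`. -/
def chain : List ℕ → RTerm (Fin 3)
  | [] => RTerm.node 0 []
  | n :: ns => RTerm.node 2 [iter1 n, chain ns]

/-- The language of chains with pairwise distinct exponents. -/
def LKey : Set (RTerm (Fin 3)) := {t | ∃ ns : List ℕ, ns.Nodup ∧ t = chain ns}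

/-- `bracket [n1,…,nk] = f(g^{n1}(a), f(…, f(g^{n_{k−1}}(a), g^{n_k}(a))…))`. -/
def bracket : List ℕ → RTerm (Fin 3)
  | [] => RTerm.node 0 []
  | [n] => iter1 n
  | n :: ns => RTerm.node 2 [iter1 n, bracket ns]

/-- Every entry has exactly one partner with the same value. -/
def ExactlyOnePartner (ns : List ℕ) : Prop :=
  ∀ i, i < ns.length → ∃! j, j < ns.length ∧ j ≠ i ∧ ns[i]? = ns[j]?

def LDup : Set (RTerm (Fin 3)) :=
  {t | ∃ ns : List ℕ, ns ≠ [] ∧ ExactlyOnePartner ns ∧ t = bracket ns}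

/-! ### Concrete, codable presentations of automata -/

abbrev RuleData := ℕ × List ℕ × List (ℕ × ℕ) × List (ℕ × ℕ) × ℕ
abbrev PatAtomData := ℕ ⊕ ℕ
abbrev FlatSideData := PatAtomData ⊕ (ℕ × List PatAtomData)
abbrev LinData := List (ℤ × ℕ) × ℤ
abbrev GAtomData := (ℕ × ℕ) ⊕ ((ℕ × ℕ) ⊕ (LinData ⊕ LinData))
abbrev GCNodeData := GAtomData ⊕ (ℕ × ℕ × ℕ)
abbrev TABGData :=
  List (ℕ × ℕ) × List RuleData × List ℕ × List (FlatSideData × FlatSideData) ×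
    List GCNodeData

def decodePatAtom : PatAtomData → Pat ℕ
  | Sum.inl v => Pat.var v
  | Sum.inr c => Pat.node c []

def decodeSide : FlatSideData → Pat ℕ
  | Sum.inl a => decodePatAtom a
  | Sum.inr (f, l) => Pat.node f (l.map decodePatAtom)

def decodeGAtom : GAtomData → GAtom ℕ
  | Sum.inl (q, q') => GAtom.eq q q'
  | Sum.inr (Sum.inl (q, q')) => GAtom.neq q q'
  | Sum.inr (Sum.inr (Sum.inl (l, a))) => GAtom.cnt l a
  | Sum.inr (Sum.inr (Sum.inr (l, a))) => GAtom.cls l a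

def decodeGC (nodes : List GCNodeData) : ℕ → ℕ → GC ℕ
  | 0, _ => GC.tt
  | fuel + 1, i =>
    match nodes[i]? with
    | some (Sum.inl a) => GC.atom (decodeGAtom a)
    | some (Sum.inr (op, l, rr)) =>
      if op = 0 then GC.tt
      else if op = 1 then GC.ff
      else if op = 2 then GC.and (decodeGC nodes fuel l) (decodeGC nodes fuel rr)
      else if op = 3 then GC.or (decodeGC nodes fuel l) (decodeGC nodes fuel rr)
      else GC.not (decodeGC nodes fuel l)
    | none => GC.tt

def decodeRule : RuleData → Rule ℕ ℕ
  | (f, args, be, bn, q) => ⟨f, args, be, bn, q⟩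

def decodeArity (sig : List (ℕ × ℕ)) : ℕ → ℕ :=
  fun f => (((sig.find? (fun p => p.1 == f)).map Prod.snd).getD 0)

def dataStates (rules : List RuleData) (final : List ℕ) : Finset ℕ :=
  (rules.flatMap (fun r => r.2.2.2.2 :: r.2.1)).toFinset ∪ final.toFinset

/-- Decoding of a full TABG with arbitrary Boolean global constraint. -/
def decodeTABG (d : TABGData) : TABG ℕ ℕ :=
  { arity := decodeArity d.1
    stQ := dataStates d.2.1 d.2.2.1
    rules := d.2.1.map decodeRule
    final := d.2.2.1
    eqs := d.2.2.2.1.map (fun e => (decodeSide e.1, decodeSide e.2))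
    gc := decodeGC d.2.2.2.2 (d.2.2.2.2).length 0 }

/-- Data for a `TAG^∧[≈]` : signature, rules (no brother constraints), final
states, and a conjunction of equational atoms `q ≈ q'`. -/
abbrev TAGCEData := List (ℕ × ℕ) × List (ℕ × List ℕ × ℕ) × List ℕ × List (ℕ × ℕ)

def decodeTAGCE (d : TAGCEData) : TABG ℕ ℕ :=
  { arity := decodeArity d.1
    stQ := (d.2.1.flatMap (fun r => r.2.2 :: r.2.1)).toFinset ∪ d.2.2.1.toFinset
    rules := d.2.1.map (fun r => ⟨r.1, r.2.1, [], [], r.2.2⟩)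
    final := d.2.2.1
    eqs := []
    gc := conjList (d.2.2.2.map (fun qq => GC.atom (GAtom.eq qq.1 qq.2))) }

/-- Data for a `TAG^∧[≈, |.|_ℤ]` : as above plus a conjunction of integer linear
inequalities. -/
abbrev TAGCZData :=
  List (ℕ × ℕ) × List (ℕ × List ℕ × ℕ) × List ℕ × List (ℕ × ℕ) × List LinData

def decodeTAGCZ (d : TAGCZData) : TABG ℕ ℕ :=
  { arity := decodeArity d.1
    stQ := (d.2.1.flatMap (fun r => r.2.2 :: r.2.1)).toFinset ∪ d.2.2.1.toFinset
    rules := d.2.1.map (fun r => ⟨r.1, r.2.1, [], [], r.2.2⟩)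
    final := d.2.2.1
    eqs := []
    gc := conjList
      (d.2.2.2.1.map (fun qq => GC.atom (GAtom.eq qq.1 qq.2)) ++
       d.2.2.2.2.map (fun la => GC.atom (GAtom.cnt la.1 la.2))) }

/-- A tree language over the ranked signature `ar` is regular if it is the
language of a plain tree automaton. -/
def IsRegular (ar : ℕ → ℕ) (L : Set (RTerm ℕ)) : Prop :=
  ∃ (n : ℕ) (B : TABG ℕ (Fin n)), B.arity = ar ∧ B.WF ∧ B.IsTA ∧ B.Lang = L

/-! ### Automata classes as predicates -/

/-- A TAGED: a TAG whose constraint is a conjunction of atoms `q ≈ q'`, `q ≉ q'`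
without reflexive disequalities. -/
def TAGEDCond {F Q : Type} (A : TABG F Q) : Prop :=
  A.IsTAG ∧ A.gc.IsConjAtoms ∧ A.gc.AtomsAre GAtom.IsEqNeq ∧ A.gc.NoReflNeq

/-- A positive conjunctive TAG with eq/neq atoms (`TAG^∧[≈,≉]`). -/
def TAGCwCond {F Q : Type} (A : TABG F Q) : Prop :=
  A.IsTAG ∧ A.gc.IsConjAtoms ∧ A.gc.AtomsAre GAtom.IsEqNeq

end TreeAut

/-!
The intersection is recognised by the product automaton. A product rule pairs two rules with the
same symbol and arity, zips their argument states and conjoins their brother constraints, so that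
runs of the product on a term correspond, node by node, to pairs of runs of `A1` and `A2` on it.
An atom `q ≈ q'` of `A1` becomes the conjunction of the atoms `(q, a) ≈ (q', a')` over product
states, and symmetrically for `A2`. Satisfaction of a global constraint only depends on the term
annotated with the states, so the pulled-back constraint holds on a product run iff the original
one holds on the corresponding component.
-/

theorem List.exists_map_eq_map_of_forall_mem {α β γ : Type*} {P : β → Prop} {f : α → γ}
    {g : β → γ} : ∀ {l : List α}, (∀ x ∈ l, ∃ y, P y ∧ f x = g y) →
      ∃ l' : List β, (∀ y ∈ l', P y) ∧ l.map f = l'.map g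
  | [], _ => ⟨[], by simp, rfl⟩
  | x :: l, h => by
    obtain ⟨y, hy, hxy⟩ := h x List.mem_cons_self
    obtain ⟨l', hl', hll'⟩ := exists_map_eq_map_of_forall_mem fun z hz => h z (.tail _ hz)
    exact ⟨y :: l', List.forall_mem_cons.2 ⟨hy, hl'⟩, by simp [hxy, hll']⟩

theorem List.exists_map_eq_map_of_map_eq_map {α β γ δ ε ζ : Type*} {P : δ → Prop}
    {f1 : α → γ} {f2 : β → γ} {g1 : α → ε} {g2 : β → ζ} {h1 : δ → ε} {h2 : δ → ζ} :
    ∀ {l1 : List α} {l2 : List β}, l1.map f1 = l2.map f2 →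
      (∀ a ∈ l1, ∀ b ∈ l2, f1 a = f2 b → ∃ c, P c ∧ g1 a = h1 c ∧ g2 b = h2 c) →
      ∃ l : List δ, (∀ c ∈ l, P c) ∧ l1.map g1 = l.map h1 ∧ l2.map g2 = l.map h2
  | [], [], _, _ => ⟨[], by simp, rfl, rfl⟩
  | a :: l1, b :: l2, h, H => by
    obtain ⟨hab, hl⟩ := List.cons_eq_cons.1 h
    obtain ⟨c, hc, ha, hb⟩ := H a List.mem_cons_self b List.mem_cons_self hab
    obtain ⟨l, hl', h1l, h2l⟩ := exists_map_eq_map_of_map_eq_map hl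
      fun a' ha' b' hb' => H a' (.tail _ ha') b' (.tail _ hb')
    exact ⟨c :: l, List.forall_mem_cons.2 ⟨hc, hl'⟩, by simp [ha, h1l], by simp [hb, h2l]⟩

namespace TreeAut

open RTerm

namespace RTerm

variable {α β γ : Type}

@[simp]
theorem map_node (g : α → β) (a : α) (ts : List (RTerm α)) :
    (node a ts).map g = node (g a) (ts.map (map g)) := by
  rw [map]
  simp

@[simp]
theorem rootLabel_map (g : α → β) (t : RTerm α) : (t.map g).rootLabel = g t.rootLabel := by
  obtain ⟨a, ts⟩ := t
  simp [rootLabel]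

theorem map_map (g : α → β) (h : β → γ) : ∀ t : RTerm α, (t.map g).map h = t.map (h ∘ g)
  | node a ts => by
    simp only [map_node, List.map_map, Function.comp_apply]
    congr 1
    exact List.map_congr_left fun t _ => map_map g h t

theorem subAt_nil_iff {t s : RTerm α} : SubAt t [] s ↔ s = t :=
  ⟨fun h => by cases h; rfl, fun h => h ▸ .refl t⟩

theorem subAt_map_iff (g : α → β) {t : RTerm α} {p : List ℕ} {u : RTerm β} :
    SubAt (t.map g) p u ↔ ∃ s, SubAt t p s ∧ s.map g = u := by
  induction p generalizing t with
  | nil =>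
    simp only [subAt_nil_iff, exists_eq_left]
    exact eq_comm
  | cons i p ih =>
    obtain ⟨a, ts⟩ := t
    rw [map_node]
    constructor
    · rintro (_ | ⟨hget, hsub⟩)
      rw [List.getElem?_map, Option.map_eq_some_iff] at hget
      obtain ⟨u, hu, rfl⟩ := hget
      obtain ⟨s, hs, rfl⟩ := ih.1 hsub
      exact ⟨s, .step hu hs, rfl⟩
    · rintro ⟨s, _ | ⟨hget, hsub⟩, rfl⟩
      exact .step (by rw [List.getElem?_map, hget]; rfl) (ih.2 ⟨s, hsub, rfl⟩)

end RTerm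

section Naturality

variable {β γ F Q : Type} (E : List (Pat F × Pat F)) (st : γ → Q) (sy : γ → F) (g : β → γ)
  (r : RTerm β)

theorem stPos_map (q : Q) : stPos st (r.map g) q = stPos (st ∘ g) r q := by
  ext p
  simp only [stPos, Set.mem_ofPred_eq, subAt_map_iff]
  constructor
  · rintro ⟨_, ⟨s, hs, rfl⟩, hq⟩
    exact ⟨s, hs, by simpa using hq⟩
  · rintro ⟨s, hs, hq⟩
    exact ⟨_, ⟨s, hs, rfl⟩, by simpa using hq⟩

theorem stTerms_map (q : Q) : stTerms st sy (r.map g) q = stTerms (st ∘ g) (sy ∘ g) r q := by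
  ext t
  simp only [stTerms, Set.mem_ofPred_eq, subAt_map_iff]
  constructor
  · rintro ⟨p, _, ⟨s, hs, rfl⟩, hq, rfl⟩
    exact ⟨p, s, hs, by simpa using hq, (map_map g sy s).symm⟩
  · rintro ⟨p, s, hs, hq, rfl⟩
    exact ⟨p, _, ⟨s, hs, rfl⟩, by simpa using hq, map_map g sy s⟩

theorem forall_subAt_pair_map_iff (Φ : RTerm γ → RTerm γ → Prop) :
    (∀ p p' s s', p ≠ p' → SubAt (r.map g) p s → SubAt (r.map g) p' s' → Φ s s') ↔
      ∀ p p' s s', p ≠ p' → SubAt r p s → SubAt r p' s' → Φ (s.map g) (s'.map g) := by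
  simp only [subAt_map_iff]
  constructor
  · intro h p p' s s' hp hs hs'
    exact h p p' _ _ hp ⟨s, hs, rfl⟩ ⟨s', hs', rfl⟩
  · rintro h p p' _ _ hp ⟨s, hs, rfl⟩ ⟨s', hs', rfl⟩
    exact h p p' s s' hp hs hs'

theorem satAtom_map (a : GAtom Q) :
    satAtom E st sy (r.map g) a ↔ satAtom E (st ∘ g) (sy ∘ g) r a := by
  cases a with
  | eq q q' =>
    simp only [satAtom, forall_subAt_pair_map_iff, rootLabel_map, map_map]; rfl
  | neq q q' =>
    simp only [satAtom, forall_subAt_pair_map_iff, rootLabel_map, map_map]; rfl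
  | cnt l a => simp only [satAtom, stCount, stPos_map]
  | cls l a => simp only [satAtom, clsCount, stTerms_map]

theorem satGC_map (c : GC Q) :
    satGC E st sy (r.map g) c ↔ satGC E (st ∘ g) (sy ∘ g) r c := by
  induction c with
  | tt | ff => rfl
  | atom a => exact satAtom_map E st sy g r a
  | and c d hc hd => exact and_congr hc hd
  | or c d hc hd => exact or_congr hc hd
  | not c hc => exact not_congr hc

end Naturality

theorem satGC_conjList {β F Q : Type} (E : List (Pat F × Pat F)) (st : β → Q) (sy : β → F)
    (r : RTerm β) (l : List (GC Q)) :
    satGC E st sy r (conjList l) ↔ ∀ c ∈ l, satGC E st sy r c := by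
  induction l with
  | nil => simp [conjList, satGC]
  | cons c cs ih =>
    cases cs with
    | nil => simp [conjList]
    | cons d ds => simp only [conjList, satGC, ih, List.forall_mem_cons]

theorem GC.atomsAre_conjList {Q : Type} {P : GAtom Q → Prop} {l : List (GC Q)}
    (h : ∀ c ∈ l, c.AtomsAre P) : (conjList l).AtomsAre P := by
  induction l with
  | nil => trivial
  | cons c cs ih =>
    cases cs with
    | nil => exact h c (by simp)
    | cons d ds => exact ⟨h c (by simp), ih fun x hx => h x (List.mem_cons_of_mem _ hx)⟩

section Comap

variable {β F P Q : Type} [DecidableEq Q]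

/-- Counting atoms have no pullback and are sent to `tt`; `satGC_comap_iff` excludes them. -/
def GC.comap (S : List P) (π : P → Q) : GC Q → GC P
  | .tt => .tt
  | .ff => .ff
  | .atom (.eq q q') => conjList ((S.filter (π · = q) ×ˢ S.filter (π · = q')).map
      fun x => .atom (.eq x.1 x.2))
  | .atom (.neq q q') => conjList ((S.filter (π · = q) ×ˢ S.filter (π · = q')).map
      fun x => .atom (.neq x.1 x.2))
  | .atom (.cnt _ _) | .atom (.cls _ _) => .tt
  | .and c d => .and (c.comap S π) (d.comap S π)
  | .or c d => .or (c.comap S π) (d.comap S π)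
  | .not c => .not (c.comap S π)

theorem GC.atomsAre_comap (S : List P) (π : P → Q) (c : GC Q) :
    (c.comap S π).AtomsAre GAtom.IsEqNeq := by
  induction c with
  | tt | ff => trivial
  | atom a =>
    cases a with
    | eq | neq =>
      exact GC.atomsAre_conjList fun c hc => by obtain ⟨_, _, rfl⟩ := List.mem_map.1 hc; trivial
    | cnt | cls => trivial
  | and c d hc hd | or c d hc hd => exact ⟨hc, hd⟩
  | not c hc => exact hc

variable {S : List P} {st : β → P} {r : RTerm β}

theorem forall_mem_fiber_pair_iff (hS : ∀ p s, SubAt r p s → st s.rootLabel ∈ S) (π : P → Q)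
    (q q' : Q) (Φ : RTerm β → RTerm β → Prop) :
    (∀ x ∈ S.filter (π · = q) ×ˢ S.filter (π · = q'), ∀ p p' s s', p ≠ p' → SubAt r p s →
        SubAt r p' s' → st s.rootLabel = x.1 → st s'.rootLabel = x.2 → Φ s s') ↔
      ∀ p p' s s', p ≠ p' → SubAt r p s → SubAt r p' s' →
        π (st s.rootLabel) = q → π (st s'.rootLabel) = q' → Φ s s' := by
  simp only [Prod.forall, List.mem_product, List.mem_filter, decide_eq_true_eq]
  constructor
  · intro h p p' s s' hp hs hs' hq hq'
    exact h _ _ ⟨⟨hS p s hs, hq⟩, hS p' s' hs', hq'⟩ p p' s s' hp hs hs' rfl rfl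
  · rintro h x x' ⟨⟨-, rfl⟩, -, rfl⟩ p p' s s' hp hs hs' rfl rfl
    exact h p p' s s' hp hs hs' rfl rfl

theorem satGC_comap_iff (E : List (Pat F × Pat F)) (sy : β → F)
    (hS : ∀ p s, SubAt r p s → st s.rootLabel ∈ S) (π : P → Q) {c : GC Q}
    (hc : c.AtomsAre GAtom.IsEqNeq) :
    satGC E st sy r (c.comap S π) ↔ satGC E (π ∘ st) sy r c := by
  induction c with
  | tt | ff => rfl
  | atom a =>
    cases a with
    | eq q q' =>
      simp only [GC.comap, satGC_conjList, List.forall_mem_map]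
      exact forall_mem_fiber_pair_iff hS π q q' _
    | neq q q' =>
      simp only [GC.comap, satGC_conjList, List.forall_mem_map]
      exact forall_mem_fiber_pair_iff hS π q q' _
    | cnt | cls => exact hc.elim
  | and c d hc' hd' => exact and_congr (hc' hc.1) (hd' hc.2)
  | or c d hc' hd' => exact or_congr (hc' hc.1) (hd' hc.2)
  | not c hc' => exact not_congr (hc' hc)

end Comap

section Runs

variable {F Q Q' Q'' : Type}

def Run.annot (π : Q → Q') (r : Run F Q) : RTerm (Q' × F) := r.map fun ρ => (π ρ.res, ρ.sym)

@[simp]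
theorem Run.annot_node (π : Q → Q') (ρ : Rule F Q) (rs : List (Run F Q)) :
    Run.annot π (.node ρ rs) = .node (π ρ.res, ρ.sym) (rs.map (annot π)) := by
  simp [annot]

@[simp]
theorem Run.term_node (ρ : Rule F Q) (rs : List (Run F Q)) :
    Run.term (.node ρ rs) = .node ρ.sym (rs.map term) := by
  simp [term]

theorem Run.map_snd_annot (π : Q → Q') (r : Run F Q) : (r.annot π).map Prod.snd = r.term :=
  map_map _ _ r

theorem Run.term_eq_of_annot_eq {π : Q → Q''} {π' : Q' → Q''} {r : Run F Q} {r' : Run F Q'}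
    (h : r.annot π = r'.annot π') : r.term = r'.term := by
  rw [← map_snd_annot π, ← map_snd_annot π', h]

theorem Run.rootLabel_annot (π : Q → Q') (r : Run F Q) :
    (r.annot π).rootLabel = (π r.state, r.rootLabel.sym) :=
  rootLabel_map _ r

theorem Run.map_term_eq_of_map_annot_eq {π : Q → Q''} {π' : Q' → Q''} {rs : List (Run F Q)}
    {rs' : List (Run F Q')} (h : rs.map (annot π) = rs'.map (annot π')) :
    rs.map term = rs'.map term := by
  simpa [List.map_map, Function.comp_def, map_snd_annot] using
    congrArg (List.map (RTerm.map Prod.snd)) h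

theorem Run.map_state_eq_of_map_annot_eq {π : Q → Q''} {π' : Q' → Q''} {rs : List (Run F Q)}
    {rs' : List (Run F Q')} (h : rs.map (annot π) = rs'.map (annot π')) :
    rs.map (π ∘ state) = rs'.map (π' ∘ state) := by
  simpa [List.map_map, Function.comp_def, rootLabel_annot] using
    congrArg (List.map fun t => t.rootLabel.1) h

theorem satGC_iff_of_annot_eq {E : List (Pat F × Pat F)} {π : Q → Q''} {π' : Q' → Q''}
    {r : Run F Q} {r' : Run F Q'} (h : r.annot π = r'.annot π') (c : GC Q'') :
    satGC E (π ∘ Rule.res) Rule.sym r c ↔ satGC E (π' ∘ Rule.res) Rule.sym r' c := by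
  have hr : satGC E Prod.fst Prod.snd (r.annot π) c ↔ satGC E (π ∘ Rule.res) Rule.sym r c :=
    satGC_map E _ _ _ r c
  have hr' : satGC E Prod.fst Prod.snd (r'.annot π') c ↔
      satGC E (π' ∘ Rule.res) Rule.sym r' c :=
    satGC_map E _ _ _ r' c
  rw [← hr, ← hr', h]

def BrothersSat (Φ : RTerm F → RTerm F → Prop) (L : List (ℕ × ℕ)) (ts : List (RTerm F)) :
    Prop :=
  ∀ i j ti tj, (i, j) ∈ L → ts[i - 1]? = some ti → ts[j - 1]? = some tj → Φ ti tj

theorem brothersSat_map_iff {α : Type} {Φ : RTerm F → RTerm F → Prop} {L : List (ℕ × ℕ)}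
    {f : α → RTerm F} {l : List α} :
    BrothersSat Φ L (l.map f) ↔ ∀ i j xi xj, (i, j) ∈ L → l[i - 1]? = some xi →
      l[j - 1]? = some xj → Φ (f xi) (f xj) := by
  simp only [BrothersSat, List.getElem?_map, Option.map_eq_some_iff]
  constructor
  · intro h i j xi xj hij hi hj
    exact h i j _ _ hij ⟨xi, hi, rfl⟩ ⟨xj, hj, rfl⟩
  · rintro h i j _ _ hij ⟨xi, hi, rfl⟩ ⟨xj, hj, rfl⟩
    exact h i j xi xj hij hi hj

theorem BrothersSat.mono {Φ : RTerm F → RTerm F → Prop} {L L' : List (ℕ × ℕ)}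
    {ts : List (RTerm F)} (h : BrothersSat Φ L ts) (hL : L' ⊆ L) : BrothersSat Φ L' ts :=
  fun i j ti tj hij => h i j ti tj (hL hij)

theorem brothersSat_append {Φ : RTerm F → RTerm F → Prop} {L L' : List (ℕ × ℕ)}
    {ts : List (RTerm F)} :
    BrothersSat Φ (L ++ L') ts ↔ BrothersSat Φ L ts ∧ BrothersSat Φ L' ts := by
  simp only [BrothersSat, List.mem_append]
  grind

variable {Δ : List (Rule F Q)} {E : List (Pat F × Pat F)}

theorem isRun_node_iff {ρ : Rule F Q} {rs : List (Run F Q)} :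
    IsRun Δ E (node ρ rs) ↔ ρ ∈ Δ ∧ ρ.args = rs.map Run.state ∧ (∀ r ∈ rs, IsRun Δ E r) ∧
      BrothersSat (EqE E) ρ.bcEq (rs.map Run.term) ∧
      BrothersSat (fun t t' => ¬ EqE E t t') ρ.bcNeq (rs.map Run.term) := by
  simp only [brothersSat_map_iff]
  constructor
  · rintro ⟨hρ, hargs, hrs, hbe, hbn⟩
    exact ⟨hρ, hargs, hrs, hbe, hbn⟩
  · rintro ⟨hρ, hargs, hrs, hbe, hbn⟩
    exact .node hρ hargs hrs hbe hbn

theorem IsRun.rootLabel_mem {r s : Run F Q} {p : List ℕ} (hr : IsRun Δ E r)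
    (hs : SubAt r p s) : s.rootLabel ∈ Δ := by
  induction hs with
  | refl => obtain ⟨hρ, -⟩ := hr; exact hρ
  | step hget _ ih =>
    obtain ⟨-, -, hrs, -⟩ := hr
    exact ih (hrs _ (List.mem_of_getElem? hget))

def Rule.ProjectsTo (π : Q → Q') (ρ : Rule F Q) (ρ' : Rule F Q') : Prop :=
  ρ'.sym = ρ.sym ∧ ρ'.args = ρ.args.map π ∧ ρ'.res = π ρ.res ∧ ρ'.bcEq ⊆ ρ.bcEq ∧
    ρ'.bcNeq ⊆ ρ.bcNeq

theorem IsRun.exists_projectsTo {Δ' : List (Rule F Q')} {π : Q → Q'}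
    (hΔ : ∀ ρ ∈ Δ, ∃ ρ' ∈ Δ', ρ.ProjectsTo π ρ') {r : Run F Q} (hr : IsRun Δ E r) :
    ∃ r', IsRun Δ' E r' ∧ r.annot π = r'.annot id := by
  induction hr with
  | @node ρ rs hρ hargs _ hbe hbn ih =>
    obtain ⟨ρ', hρ', hsym, hargs', hres, hbe', hbn'⟩ := hΔ ρ hρ
    obtain ⟨rs', hrs', hmap⟩ := List.exists_map_eq_map_of_forall_mem ih
    have hterm := Run.map_term_eq_of_map_annot_eq hmap
    refine ⟨.node ρ' rs', isRun_node_iff.2 ⟨hρ', ?_, hrs', ?_, ?_⟩, ?_⟩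
    · rw [hargs', hargs, List.map_map, Run.map_state_eq_of_map_annot_eq hmap]; rfl
    · exact hterm ▸ (brothersSat_map_iff.2 hbe).mono hbe'
    · exact hterm ▸ (brothersSat_map_iff.2 hbn).mono hbn'
    · rw [Run.annot_node, Run.annot_node, hmap, hres, hsym]; rfl

end Runs

section Product

variable {F Q1 Q2 : Type}

def Rule.prod (ρ1 : Rule F Q1) (ρ2 : Rule F Q2) : Rule F (Q1 × Q2) :=
  ⟨ρ1.sym, ρ1.args.zip ρ2.args, ρ1.bcEq ++ ρ2.bcEq, ρ1.bcNeq ++ ρ2.bcNeq, (ρ1.res, ρ2.res)⟩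

def Rule.Compatible (ρ1 : Rule F Q1) (ρ2 : Rule F Q2) : Prop :=
  ρ1.sym = ρ2.sym ∧ ρ1.args.length = ρ2.args.length

theorem Rule.Compatible.projectsTo_fst {ρ1 : Rule F Q1} {ρ2 : Rule F Q2}
    (h : ρ1.Compatible ρ2) : (ρ1.prod ρ2).ProjectsTo Prod.fst ρ1 :=
  ⟨rfl, (List.map_fst_zip h.2.le).symm, rfl, List.subset_append_left _ _,
    List.subset_append_left _ _⟩

theorem Rule.Compatible.projectsTo_snd {ρ1 : Rule F Q1} {ρ2 : Rule F Q2}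
    (h : ρ1.Compatible ρ2) : (ρ1.prod ρ2).ProjectsTo Prod.snd ρ2 :=
  ⟨h.1.symm, (List.map_snd_zip h.2.ge).symm, rfl, List.subset_append_right _ _,
    List.subset_append_right _ _⟩

theorem Rule.Compatible.wfr_prod {ar : F → ℕ} {ar' : F → ℕ} {S1 : Finset Q1} {S2 : Finset Q2}
    {ρ1 : Rule F Q1} {ρ2 : Rule F Q2} (h : ρ1.Compatible ρ2) (h1 : ρ1.WFr ar S1)
    (h2 : ρ2.WFr ar' S2) : (ρ1.prod ρ2).WFr ar (S1 ×ˢ S2) := by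
  obtain ⟨hlen1, hres1, hargs1, hbe1, hbn1⟩ := h1
  obtain ⟨-, hres2, hargs2, hbe2, hbn2⟩ := h2
  have hlen : (ρ1.prod ρ2).args.length = ρ1.args.length := by
    simp [Rule.prod, h.2]
  refine ⟨hlen.trans hlen1, Finset.mem_product.2 ⟨hres1, hres2⟩, fun q hq => ?_, ?_, ?_⟩
  · exact Finset.mem_product.2 ⟨hargs1 _ (List.of_mem_zip hq).1, hargs2 _ (List.of_mem_zip hq).2⟩
  · rw [hlen]
    intro ij hij
    rcases List.mem_append.1 hij with hij | hij
    · exact hbe1 ij hij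
    · exact h.2 ▸ hbe2 ij hij
  · rw [hlen]
    intro ij hij
    rcases List.mem_append.1 hij with hij | hij
    · exact hbn1 ij hij
    · exact h.2 ▸ hbn2 ij hij

variable [DecidableEq F]

instance (ρ1 : Rule F Q1) (ρ2 : Rule F Q2) : Decidable (ρ1.Compatible ρ2) :=
  inferInstanceAs (Decidable (_ ∧ _))

def prodRules (Δ1 : List (Rule F Q1)) (Δ2 : List (Rule F Q2)) : List (Rule F (Q1 × Q2)) :=
  ((Δ1 ×ˢ Δ2).filter fun x => x.1.Compatible x.2).map fun x => x.1.prod x.2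

theorem mem_prodRules {Δ1 : List (Rule F Q1)} {Δ2 : List (Rule F Q2)} {ρ : Rule F (Q1 × Q2)} :
    ρ ∈ prodRules Δ1 Δ2 ↔ ∃ ρ1 ∈ Δ1, ∃ ρ2 ∈ Δ2, ρ1.Compatible ρ2 ∧ ρ1.prod ρ2 = ρ := by
  simp [prodRules, and_assoc]

end Product

section ProductRun

variable {F Q1 Q2 : Type} [DecidableEq F] {Δ1 : List (Rule F Q1)} {Δ2 : List (Rule F Q2)}
  {E : List (Pat F × Pat F)}

theorem IsRun.exists_prod {r1 : Run F Q1} (h1 : IsRun Δ1 E r1) {r2 : Run F Q2}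
    (h2 : IsRun Δ2 E r2) (hterm : r1.term = r2.term) :
    ∃ r, IsRun (prodRules Δ1 Δ2) E r ∧ r.annot Prod.fst = r1.annot id ∧
      r.annot Prod.snd = r2.annot id := by
  induction h1 generalizing r2 with
  | @node ρ1 rs1 hρ1 hargs1 _ hbe1 hbn1 ih =>
    obtain ⟨ρ2, rs2⟩ := r2
    obtain ⟨hρ2, hargs2, hrs2, hbe2, hbn2⟩ := isRun_node_iff.1 h2
    obtain ⟨hsym, hterms⟩ : ρ1.sym = ρ2.sym ∧ rs1.map Run.term = rs2.map Run.term := by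
      simpa using hterm
    obtain ⟨rs, hrs, hmap1, hmap2⟩ := List.exists_map_eq_map_of_map_eq_map hterms
      fun r1 hr1 r2 hr2 hterm => by
        obtain ⟨r, hr, e1, e2⟩ := ih r1 hr1 (hrs2 r2 hr2) hterm
        exact ⟨r, hr, e1.symm, e2.symm⟩
    have hterm1 := Run.map_term_eq_of_map_annot_eq hmap1
    have hterm2 := Run.map_term_eq_of_map_annot_eq hmap2
    have hcomp : ρ1.Compatible ρ2 :=
      ⟨hsym, by simpa [hargs1, hargs2] using congrArg List.length hterms⟩
    refine ⟨.node (ρ1.prod ρ2) rs, isRun_node_iff.2 ⟨?_, ?_, hrs, ?_, ?_⟩, ?_, ?_⟩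
    · exact mem_prodRules.2 ⟨ρ1, hρ1, ρ2, hρ2, hcomp, rfl⟩
    · have hs1 := Run.map_state_eq_of_map_annot_eq hmap1
      have hs2 := Run.map_state_eq_of_map_annot_eq hmap2
      simp only [Function.id_comp] at hs1 hs2
      simp only [Rule.prod, hargs1, hargs2, hs1, hs2, List.zip_map']
      rfl
    · exact brothersSat_append.2 ⟨hterm1 ▸ brothersSat_map_iff.2 hbe1, hterm2 ▸ hbe2⟩
    · exact brothersSat_append.2 ⟨hterm1 ▸ brothersSat_map_iff.2 hbn1, hterm2 ▸ hbn2⟩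
    · simp [hmap1, Rule.prod]
    · simp [hmap2, Rule.prod, hsym]

end ProductRun

section Inter

variable {F Q1 Q2 : Type} [DecidableEq F] [DecidableEq Q1] [DecidableEq Q2]

/-- The constraints are pulled back to the states occurring in product rules: these are all the
states a run can use. -/
def TABG.inter (A1 : TABG F Q1) (A2 : TABG F Q2) : TABG F (Q1 × Q2) where
  arity := A1.arity
  stQ := A1.stQ ×ˢ A2.stQ
  rules := prodRules A1.rules A2.rules
  final := A1.final ×ˢ A2.final
  eqs := A1.eqs
  gc := .and (A1.gc.comap ((prodRules A1.rules A2.rules).map Rule.res) Prod.fst)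
    (A2.gc.comap ((prodRules A1.rules A2.rules).map Rule.res) Prod.snd)

variable {A1 : TABG F Q1} {A2 : TABG F Q2}

theorem TABG.inter_wf (h1 : A1.WF) (h2 : A2.WF) : (A1.inter A2).WF := by
  refine ⟨h1.1, fun ρ hρ => ?_, fun q hq => ?_⟩
  · obtain ⟨ρ1, hρ1, ρ2, hρ2, hc, rfl⟩ := mem_prodRules.1 hρ
    exact hc.wfr_prod (h1.2.1 ρ1 hρ1) (h2.2.1 ρ2 hρ2)
  · obtain ⟨hq1, hq2⟩ := List.mem_product.1 hq
    exact Finset.mem_product.2 ⟨h1.2.2 _ hq1, h2.2.2 _ hq2⟩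

theorem TABG.inter_gc_atomsAre : (A1.inter A2).gc.AtomsAre GAtom.IsEqNeq :=
  ⟨GC.atomsAre_comap _ _ _, GC.atomsAre_comap _ _ _⟩

theorem TABG.inter_isAccRun_iff (heq : A2.eqs = A1.eqs) (ha1 : A1.gc.AtomsAre GAtom.IsEqNeq)
    (ha2 : A2.gc.AtomsAre GAtom.IsEqNeq) {r : Run F (Q1 × Q2)} {r1 : Run F Q1}
    {r2 : Run F Q2} (hr : IsRun (A1.inter A2).rules A1.eqs r) (h1 : IsRun A1.rules A1.eqs r1)
    (h2 : IsRun A2.rules A2.eqs r2) (e1 : r.annot Prod.fst = r1.annot id)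
    (e2 : r.annot Prod.snd = r2.annot id) :
    (A1.inter A2).IsAccRun r ↔ A1.IsAccRun r1 ∧ A2.IsAccRun r2 := by
  have hS : ∀ p s, SubAt r p s → s.rootLabel.res ∈ (A1.inter A2).rules.map Rule.res :=
    fun p s hs => List.mem_map_of_mem (hr.rootLabel_mem hs)
  have hsat1 : satGC A1.eqs Rule.res Rule.sym r
      (A1.gc.comap ((A1.inter A2).rules.map Rule.res) Prod.fst) ↔
      satGC A1.eqs Rule.res Rule.sym r1 A1.gc :=
    (satGC_comap_iff _ _ hS _ ha1).trans (satGC_iff_of_annot_eq e1 _)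
  have hsat2 : satGC A1.eqs Rule.res Rule.sym r
      (A2.gc.comap ((A1.inter A2).rules.map Rule.res) Prod.snd) ↔
      satGC A2.eqs Rule.res Rule.sym r2 A2.gc :=
    heq ▸ (satGC_comap_iff _ _ hS _ ha2).trans (satGC_iff_of_annot_eq e2 _)
  have hstate : r.state = (r1.state, r2.state) := by
    have h1 := congrArg (fun t => t.rootLabel.1) e1
    have h2 := congrArg (fun t => t.rootLabel.1) e2
    simp only [Run.rootLabel_annot, id] at h1 h2
    exact Prod.ext h1 h2
  simp only [TABG.IsAccRun, TABG.inter, satGC] at hsat1 hsat2 hr ⊢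
  rw [hsat1, hsat2, hstate, List.mem_product]
  tauto

theorem TABG.lang_inter (heq : A2.eqs = A1.eqs) (ha1 : A1.gc.AtomsAre GAtom.IsEqNeq)
    (ha2 : A2.gc.AtomsAre GAtom.IsEqNeq) : (A1.inter A2).Lang = A1.Lang ∩ A2.Lang := by
  ext t
  constructor
  · rintro ⟨r, hacc, rfl⟩
    obtain ⟨r1, h1, e1⟩ := hacc.1.exists_projectsTo (Δ' := A1.rules) fun ρ hρ => by
      obtain ⟨ρ1, hρ1, ρ2, -, hc, rfl⟩ := mem_prodRules.1 hρ
      exact ⟨ρ1, hρ1, hc.projectsTo_fst⟩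
    obtain ⟨r2, h2, e2⟩ := hacc.1.exists_projectsTo (Δ' := A2.rules) fun ρ hρ => by
      obtain ⟨ρ1, -, ρ2, hρ2, hc, rfl⟩ := mem_prodRules.1 hρ
      exact ⟨ρ2, hρ2, hc.projectsTo_snd⟩
    obtain ⟨hacc1, hacc2⟩ :=
      (inter_isAccRun_iff heq ha1 ha2 hacc.1 h1 (heq ▸ h2) e1 e2).1 hacc
    exact ⟨⟨r1, hacc1, (Run.term_eq_of_annot_eq e1).symm⟩,
      ⟨r2, hacc2, (Run.term_eq_of_annot_eq e2).symm⟩⟩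
  · rintro ⟨⟨r1, hacc1, rfl⟩, r2, hacc2, hterm⟩
    obtain ⟨r, hr, e1, e2⟩ := hacc1.1.exists_prod (heq ▸ hacc2.1) hterm.symm
    exact ⟨r, (inter_isAccRun_iff heq ha1 ha2 hr hacc1.1 hacc2.1 e1 e2).2 ⟨hacc1, hacc2⟩,
      Run.term_eq_of_annot_eq e1⟩

end Inter

theorem tabg_intersection_general {F Q1 Q2 : Type} (A1 : TABG F Q1) (A2 : TABG F Q2)
    (hwf1 : A1.WF) (hwf2 : A2.WF)
    (ha1 : A1.gc.AtomsAre GAtom.IsEqNeq) (ha2 : A2.gc.AtomsAre GAtom.IsEqNeq)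
    (heq : A2.eqs = A1.eqs) :
    ∃ A : TABG F (Q1 × Q2), A.WF ∧ A.arity = A1.arity ∧ A.eqs = A1.eqs ∧
      A.gc.AtomsAre GAtom.IsEqNeq ∧ A.Lang = A1.Lang ∩ A2.Lang := by
  classical
  exact ⟨A1.inter A2, TABG.inter_wf hwf1 hwf2, rfl, rfl, TABG.inter_gc_atomsAre,
    TABG.lang_inter heq ha1 ha2⟩

/-- TABG languages modulo the same equational theory are
effectively closed under intersection. -/
theorem tabg_intersection {F Q1 Q2 : Type} (A1 : TABG F Q1) (A2 : TABG F Q2)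
    (hwf1 : A1.WF) (hwf2 : A2.WF)
    (ha1 : A1.gc.AtomsAre GAtom.IsEqNeq) (ha2 : A2.gc.AtomsAre GAtom.IsEqNeq)
    (har : A2.arity = A1.arity) (heq : A2.eqs = A1.eqs) :
    ∃ A : TABG F (Q1 × Q2), A.WF ∧ A.arity = A1.arity ∧ A.eqs = A1.eqs ∧
      A.gc.AtomsAre GAtom.IsEqNeq ∧ A.Lang = A1.Lang ∩ A2.Lang :=
  tabg_intersection_general A1 A2 hwf1 hwf2 ha1 ha2 heq

end TreeAut
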